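/- Let M = {x \in C^n : \sum x_i = 0} with the product x*y defined as the orthogonal projection to M of the coordinatewise product xy in C^n (n \ge 3). Then the automorphism group of the commutative nonassociative algebra (M,*) is isomorphic to Sym_n, acting by coordinate permutation. -/

import Mathlib

noncomputable section

/-- `M = {x ∈ ℂⁿ : ∑ xᵢ = 0}`, the orthogonal complement of the all-ones vector. -/
def zeroSum (n : ℕ) : Submodule ℂ (Fin n → ℂ) :=
  LinearMap.ker (∑ i : Fin n, (LinearMap.proj i : (Fin n → ℂ) →ₗ[ℂ] ℂ))

lemma mem_zeroSum {n : ℕ} (x : Fin n → ℂ) : x ∈ zeroSum n ↔ ∑ i, x i = 0 := by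
  simp [zeroSum, LinearMap.mem_ker, LinearMap.sum_apply]

/-- The product on `M`: the orthogonal projection to `M` of the coordinatewise product,
`x*y = xy - (⟨xy, 𝟏⟩/n) 𝟏`. -/
def mulM {n : ℕ} (x y : zeroSum n) : zeroSum n :=
  ⟨(x : Fin n → ℂ) * (y : Fin n → ℂ) -
      ((∑ i, (x : Fin n → ℂ) i * (y : Fin n → ℂ) i) / (n : ℂ)) • ((fun _ => 1) : Fin n → ℂ), by
    rw [mem_zeroSum]
    rcases Nat.eq_zero_or_pos n with h | h
    · subst h; simp
    · have hn : (n : ℂ) ≠ 0 := Nat.cast_ne_zero.2 h.ne'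
      simp only [Pi.sub_apply, Pi.mul_apply, Pi.smul_apply, smul_eq_mul, mul_one,
        Finset.sum_sub_distrib, Finset.sum_const, Finset.card_univ, Fintype.card_fin,
        nsmul_eq_mul]
      field_simp
      ring⟩

/-- The automorphism group of the commutative nonassociative algebra `(M, *)`: invertible
linear maps preserving the product. -/
def autM (n : ℕ) : Subgroup (Module.End ℂ (zeroSum n))ˣ where
  carrier := {u | ∀ x y, (u : Module.End ℂ (zeroSum n)) (mulM x y) =
    mulM ((u : Module.End ℂ (zeroSum n)) x) ((u : Module.End ℂ (zeroSum n)) y)}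
  one_mem' := fun _ _ => rfl
  mul_mem' := by
    intro a b ha hb x y
    simp only [Units.val_mul, Module.End.mul_apply]
    rw [hb x y, ha]
  inv_mem' := by
    intro u hu x y
    have h1 : ∀ z, (↑u : Module.End ℂ (zeroSum n)) ((↑u⁻¹ : Module.End ℂ (zeroSum n)) z) = z := by
      intro z
      rw [← Module.End.mul_apply, u.mul_inv]; rfl
    have h2 : ∀ z, (↑u⁻¹ : Module.End ℂ (zeroSum n)) ((↑u : Module.End ℂ (zeroSum n)) z) = z := by
      intro z
      rw [← Module.End.mul_apply, u.inv_mul]; rfl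
    have h3 := hu ((↑u⁻¹ : Module.End ℂ (zeroSum n)) x) ((↑u⁻¹ : Module.End ℂ (zeroSum n)) y)
    rw [h1, h1] at h3
    calc (↑u⁻¹ : Module.End ℂ (zeroSum n)) (mulM x y)
        = (↑u⁻¹ : Module.End ℂ (zeroSum n))
            ((↑u : Module.End ℂ (zeroSum n)) (mulM ((↑u⁻¹ : Module.End ℂ (zeroSum n)) x)
              ((↑u⁻¹ : Module.End ℂ (zeroSum n)) y))) := by rw [← h3]
      _ = _ := h2 _

/-!
An automorphism permutes the vectors `idem n i` (the rescaled projections of the basis vectors),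
because they are exactly the idempotents `e` whose multiplication operator `y ↦ e * y` satisfies
`(L - 1)(L + a) = 0` with `a = 1/(n-2)`, a property preserved by automorphisms. Since the `idem n i`
span `M`, an automorphism is determined by the permutation it induces on them.

For the classification, `e * e = e` forces every coordinate of `e` to be a root of one quadratic,
so two different coordinates add up to `1`; for a repeated coordinate `e j = e k`, the vector
`δ_j - δ_k` is an eigenvector of `L` with eigenvalue `e j`, so `e j ∈ {1, -a}`. Together with
`∑ e j = 0` and `n ≥ 3` this leaves only `idem n i`.
-/

section TwoValued

variable {ι : Type*} {E : ι → ℂ}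

lemma ne_one_of_add_eq_one_of_sum_eq_zero [Fintype ι]
    (hpair : ∀ j k, E j ≠ E k → E j + E k = 1) (hsum : ∑ i, E i = 0) (j : ι) : E j ≠ 1 := by
  intro hj
  have hvals : ∀ l, E l = 0 ∨ E l = 1 := fun l =>
    or_iff_not_imp_right.mpr fun hl => by linear_combination hpair l j (hj ▸ hl) - hj
  have hre : ∑ l, (E l).re = 0 := by rw [← Complex.re_sum, hsum, Complex.zero_re]
  rw [Finset.sum_eq_zero_iff_of_nonneg fun l _ => by rcases hvals l with h | h <;> simp [h]] at hre
  simpa [hj] using hre j (Finset.mem_univ j)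

lemma exists_forall_ne_eq_of_add_eq_one (h3 : 3 ≤ ENat.card ι) {c : ℂ} (hne : ∃ i, E i ≠ c)
    (hpair : ∀ j k, E j ≠ E k → E j + E k = 1) (hrep : ∀ j k, j ≠ k → E j = E k → E j = c) :
    ∃ i, ∀ j, j ≠ i → E j = c := by
  obtain ⟨i, hi⟩ := hne
  refine ⟨i, fun j hji => by_contra fun hj => ?_⟩
  obtain ⟨p, hpi, hpj⟩ := ENat.exists_ne_ne_of_three_le h3 i j
  have hEpi : E p ≠ E i := fun h => hi (h ▸ hrep p i hpi h)
  have hEpj : E p ≠ E j := fun h => hj (h ▸ hrep p j hpj h)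
  exact hj (hrep j i hji (by linear_combination hpair p j hEpj - hpair p i hEpi))

end TwoValued

namespace zeroSum

variable {n : ℕ}

local infixl:70 " ⋆ " => mulM

lemma sum_coe_eq_zero (x : zeroSum n) : ∑ i, (x : Fin n → ℂ) i = 0 := (mem_zeroSum _).mp x.2

lemma ext_of_forall_ne {x y : zeroSum n} (i : Fin n)
    (h : ∀ j, j ≠ i → (x : Fin n → ℂ) j = (y : Fin n → ℂ) j) : x = y := by
  have hsum : ∑ j, (x : Fin n → ℂ) j = ∑ j, (y : Fin n → ℂ) j := by
    rw [sum_coe_eq_zero, sum_coe_eq_zero]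
  rw [Fintype.sum_eq_add_sum_compl i, Fintype.sum_eq_add_sum_compl i,
    Finset.sum_congr rfl fun j hj => h j (by simpa using hj), add_left_inj] at hsum
  ext j
  by_cases hj : j = i
  · rw [hj, hsum]
  · exact h j hj

lemma coe_mulM_apply (x y : zeroSum n) (m : Fin n) :
    (x ⋆ y : Fin n → ℂ) m
      = (x : Fin n → ℂ) m * (y : Fin n → ℂ) m
          - (∑ i, (x : Fin n → ℂ) i * (y : Fin n → ℂ) i) / n := by
  simp [mulM]

lemma mulM_smul (c : ℂ) (x y : zeroSum n) : x ⋆ (c • y) = c • (x ⋆ y) := by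
  ext m
  simp only [coe_mulM_apply, Submodule.coe_smul, Pi.smul_apply, smul_eq_mul, mul_left_comm _ c,
    ← Finset.mul_sum]
  ring

/-- `n/(n-2)` times the projection of the basis vector `δ_i` to `M`; the factor makes it
idempotent. -/
def idem (n : ℕ) (i : Fin n) : zeroSum n :=
  ⟨fun j => ((if j = i then (n : ℂ) else 0) - 1) / ((n : ℂ) - 2), by
    simp [mem_zeroSum, ← Finset.sum_div, Finset.sum_sub_distrib]⟩

lemma idem_apply (i j : Fin n) :
    (idem n i : Fin n → ℂ) j = ((if j = i then (n : ℂ) else 0) - 1) / ((n : ℂ) - 2) := rfl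

lemma coe_mulM_idem_apply (hn : n ≠ 0) (i : Fin n) (y : zeroSum n) (m : Fin n) :
    (idem n i ⋆ y : Fin n → ℂ) m
      = (((if m = i then (n : ℂ) else 0) - 1) * (y : Fin n → ℂ) m - (y : Fin n → ℂ) i)
          / ((n : ℂ) - 2) := by
  have hsum : ∑ j, (idem n i : Fin n → ℂ) j * (y : Fin n → ℂ) j
      = n * (y : Fin n → ℂ) i / (n - 2) := by
    simp [idem_apply, div_mul_eq_mul_div, ← Finset.sum_div, sub_mul, ite_mul,
      Finset.sum_sub_distrib, sum_coe_eq_zero]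
  have hn' : (n : ℂ) ≠ 0 := Nat.cast_ne_zero.mpr hn
  rw [coe_mulM_apply, hsum, idem_apply]
  field_simp

lemma cast_sub_two_ne_zero (hn : 3 ≤ n) : (n : ℂ) - 2 ≠ 0 :=
  sub_ne_zero.mpr (by exact_mod_cast (by omega : n ≠ 2))

def IsVertexIdempotent (e : zeroSum n) : Prop :=
  e ⋆ e = e ∧
    ∀ y, e ⋆ (e ⋆ y) = (1 - ((n : ℂ) - 2)⁻¹) • (e ⋆ y) + ((n : ℂ) - 2)⁻¹ • y

lemma isVertexIdempotent_idem (hn : 3 ≤ n) (i : Fin n) : IsVertexIdempotent (idem n i) := by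
  have hn0 : n ≠ 0 := by omega
  have hn2 := cast_sub_two_ne_zero hn
  constructor
  · ext m
    rw [coe_mulM_idem_apply hn0, idem_apply, idem_apply, if_pos rfl]
    split_ifs <;> field_simp <;> ring
  · intro y
    ext m
    simp only [Submodule.coe_add, Submodule.coe_smul, Pi.add_apply, Pi.smul_apply, smul_eq_mul,
      coe_mulM_idem_apply hn0]
    by_cases hm : m = i
    · subst hm
      simp only [↓reduceIte]
      field_simp
      ring
    · simp only [↓reduceIte, if_neg hm]
      field_simp
      ring

lemma idem_injective (hn : 3 ≤ n) : Function.Injective (idem n) := by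
  intro i j hij
  by_contra hne
  have h := congr_fun (congrArg Subtype.val hij) i
  rw [idem_apply, idem_apply, if_pos rfl, if_neg hne,
    div_left_inj' (cast_sub_two_ne_zero hn)] at h
  exact (by omega : n ≠ 0) (by exact_mod_cast (by linear_combination h : (n : ℂ) = 0))

lemma span_range_idem (hn : 3 ≤ n) : Submodule.span ℂ (Set.range (idem n)) = ⊤ := by
  refine Submodule.eq_top_iff'.mpr fun x => (Submodule.mem_span_range_iff_exists_fun ℂ).mpr
    ⟨fun i => ((n : ℂ) - 2) / n * (x : Fin n → ℂ) i, ?_⟩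
  have hn0 : (n : ℂ) ≠ 0 := Nat.cast_ne_zero.mpr (by omega)
  have hn2 := cast_sub_two_ne_zero hn
  ext m
  simp only [Submodule.coe_sum, Submodule.coe_smul, Finset.sum_apply, Pi.smul_apply,
    smul_eq_mul, idem_apply]
  have hterm : ∀ i, ((n : ℂ) - 2) / n * (x : Fin n → ℂ) i
      * (((if m = i then (n : ℂ) else 0) - 1) / ((n : ℂ) - 2))
      = (if m = i then (x : Fin n → ℂ) i else 0) - (x : Fin n → ℂ) i / n := by
    intro i
    split_ifs
    · field_simp
    · field_simp
      ring
  simp only [hterm, Finset.sum_sub_distrib, Finset.sum_ite_eq, Finset.mem_univ, if_true,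
    ← Finset.sum_div, sum_coe_eq_zero, zero_div, sub_zero]

def diffSingle (j k : Fin n) : zeroSum n :=
  ⟨Pi.single j 1 - Pi.single k 1, by simp [mem_zeroSum, Finset.sum_sub_distrib]⟩

lemma diffSingle_ne_zero {j k : Fin n} (hjk : j ≠ k) : diffSingle j k ≠ 0 := by
  intro h
  simpa [diffSingle, Pi.single_apply, hjk] using congr_fun (congrArg Subtype.val h) j

lemma mulM_diffSingle_of_eq {e : zeroSum n} {j k : Fin n}
    (hjk : (e : Fin n → ℂ) j = (e : Fin n → ℂ) k) :
    e ⋆ diffSingle j k = (e : Fin n → ℂ) j • diffSingle j k := by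
  have hsum : ∑ i, (e : Fin n → ℂ) i * (diffSingle j k : Fin n → ℂ) i = 0 := by
    simp [diffSingle, mul_sub, Finset.sum_sub_distrib, Pi.single_apply, hjk]
  ext m
  rw [coe_mulM_apply, hsum, zero_div, sub_zero]
  by_cases hmj : m = j
  · subst hmj; rfl
  by_cases hmk : m = k
  · subst hmk; rw [hjk]; rfl
  · simp [diffSingle, hmj, hmk]

lemma add_eq_one_of_mulM_self {e : zeroSum n} (he : e ⋆ e = e) {j k : Fin n}
    (hjk : (e : Fin n → ℂ) j ≠ (e : Fin n → ℂ) k) :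
    (e : Fin n → ℂ) j + (e : Fin n → ℂ) k = 1 := by
  have hj := congr_fun (congrArg Subtype.val he) j
  have hk := congr_fun (congrArg Subtype.val he) k
  rw [coe_mulM_apply] at hj hk
  have h : ((e : Fin n → ℂ) j - (e : Fin n → ℂ) k)
      * ((e : Fin n → ℂ) j + (e : Fin n → ℂ) k - 1) = 0 := by
    linear_combination hj - hk
  linear_combination (mul_eq_zero.mp h).resolve_left (sub_ne_zero.mpr hjk)

namespace IsVertexIdempotent

variable {e : zeroSum n}

lemma apply_eq_one_or_of_eq (he : IsVertexIdempotent e) {j k : Fin n} (hne : j ≠ k)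
    (hjk : (e : Fin n → ℂ) j = (e : Fin n → ℂ) k) :
    (e : Fin n → ℂ) j = 1 ∨ (e : Fin n → ℂ) j = -((n : ℂ) - 2)⁻¹ := by
  have h := he.2 (diffSingle j k)
  rw [mulM_diffSingle_of_eq hjk, mulM_smul, mulM_diffSingle_of_eq hjk, smul_smul, smul_smul,
    ← add_smul] at h
  have h' := smul_left_injective ℂ (diffSingle_ne_zero hne) h
  have : ((e : Fin n → ℂ) j - 1) * ((e : Fin n → ℂ) j + ((n : ℂ) - 2)⁻¹) = 0 := by
    linear_combination h'
  rcases mul_eq_zero.mp this with h1 | h1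
  · exact Or.inl (by linear_combination h1)
  · exact Or.inr (by linear_combination h1)

lemma exists_eq_idem (hn : 3 ≤ n) (he : IsVertexIdempotent e) : ∃ i, e = idem n i := by
  have hn0 : (n : ℂ) ≠ 0 := Nat.cast_ne_zero.mpr (by omega)
  have hn2 := cast_sub_two_ne_zero hn
  have hpair := fun j k => add_eq_one_of_mulM_self he.1 (j := j) (k := k)
  have hrep : ∀ j k, j ≠ k → (e : Fin n → ℂ) j = (e : Fin n → ℂ) k →
      (e : Fin n → ℂ) j = -((n : ℂ) - 2)⁻¹ := fun j k hne hjk =>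
    (he.apply_eq_one_or_of_eq hne hjk).resolve_left
      (ne_one_of_add_eq_one_of_sum_eq_zero hpair (sum_coe_eq_zero e) j)
  have hne : ∃ i, (e : Fin n → ℂ) i ≠ -((n : ℂ) - 2)⁻¹ := by
    by_contra! hall
    have h := sum_coe_eq_zero e
    simp only [hall, Finset.sum_const, Finset.card_univ, Fintype.card_fin, nsmul_eq_mul] at h
    exact mul_ne_zero hn0 (neg_ne_zero.mpr (inv_ne_zero hn2)) h
  obtain ⟨i, hi⟩ := exists_forall_ne_eq_of_add_eq_one (by simpa using hn) hne hpair hrep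
  refine ⟨i, ext_of_forall_ne i fun j hji => ?_⟩
  rw [hi j hji, idem_apply, if_neg hji]
  ring

lemma map (he : IsVertexIdempotent e) (U : zeroSum n ≃ₗ[ℂ] zeroSum n)
    (hU : ∀ x y, U (x ⋆ y) = U x ⋆ U y) : IsVertexIdempotent (U e) := by
  refine ⟨by rw [← hU, he.1], fun y => ?_⟩
  obtain ⟨y, rfl⟩ := U.surjective y
  rw [← hU, ← hU, he.2, map_add, map_smul, map_smul, hU]

end IsVertexIdempotent

def permEnd : Equiv.Perm (Fin n) →* Module.End ℂ (zeroSum n) where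
  toFun σ := (LinearMap.funLeft ℂ ℂ ⇑σ⁻¹).restrict fun x hx => by
    rw [mem_zeroSum] at hx ⊢
    exact (Equiv.sum_comp σ⁻¹ x).trans hx
  map_one' := rfl
  map_mul' _ _ := rfl

lemma coe_permEnd_apply (σ : Equiv.Perm (Fin n)) (x : zeroSum n) (m : Fin n) :
    (permEnd σ x : Fin n → ℂ) m = (x : Fin n → ℂ) (σ⁻¹ m) := rfl

lemma permEnd_idem (σ : Equiv.Perm (Fin n)) (i : Fin n) :
    permEnd σ (idem n i) = idem n (σ i) := by
  ext m
  simp only [coe_permEnd_apply, idem_apply, Equiv.Perm.inv_eq_iff_eq]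

lemma permEnd_mulM (σ : Equiv.Perm (Fin n)) (x y : zeroSum n) :
    permEnd σ (x ⋆ y) = permEnd σ x ⋆ permEnd σ y := by
  ext m
  simp only [coe_mulM_apply, coe_permEnd_apply]
  rw [Equiv.sum_comp σ⁻¹ fun i => (x : Fin n → ℂ) i * (y : Fin n → ℂ) i]

def permAut (n : ℕ) : Equiv.Perm (Fin n) →* autM n :=
  permEnd.toHomUnits.codRestrict (autM n) fun σ => permEnd_mulM σ

lemma permAut_injective (hn : 3 ≤ n) : Function.Injective (permAut n) := by
  intro σ τ h
  ext i : 1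
  apply idem_injective hn
  rw [← permEnd_idem, ← permEnd_idem]
  exact congrArg (fun u : autM n => u.1.1 (idem n i)) h

lemma permAut_surjective (hn : 3 ≤ n) : Function.Surjective (permAut n) := by
  intro u
  let U := LinearMap.GeneralLinearGroup.toLinearEquiv (u : (Module.End ℂ (zeroSum n))ˣ)
  have hU : ∀ x y, U (x ⋆ y) = U x ⋆ U y := u.2
  choose f hf using fun i => ((isVertexIdempotent_idem hn i).map U hU).exists_eq_idem hn
  have hf_inj : Function.Injective f := fun i j hij =>
    idem_injective hn (U.injective (by rw [hf, hf, hij]))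
  refine ⟨Equiv.ofBijective f (Finite.injective_iff_bijective.mp hf_inj),
    Subtype.ext (Units.ext (LinearMap.ext_on_range (span_range_idem hn) fun i => ?_))⟩
  exact (permEnd_idem _ i).trans (hf i).symm

end zeroSum

/-- the automorphism group of `(M, *)` is isomorphic to `Sym_n`, acting by
coordinate permutation. -/
theorem stmt5 (n : ℕ) (hn : 3 ≤ n) :
    ∃ φ : Equiv.Perm (Fin n) ≃* autM n,
      ∀ (σ : Equiv.Perm (Fin n)) (x : zeroSum n) (i : Fin n),
        ((((φ σ : (Module.End ℂ (zeroSum n))ˣ) : Module.End ℂ (zeroSum n)) x : Fin n → ℂ)) i =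
          (x : Fin n → ℂ) (σ⁻¹ i) :=
  ⟨MulEquiv.ofBijective (zeroSum.permAut n)
      ⟨zeroSum.permAut_injective hn, zeroSum.permAut_surjective hn⟩,
    fun _ _ _ => rfl⟩
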